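/- arXiv:0705.3790 — 2 statements merged into one kernel-verified Lean document; each statement's English description precedes it below -/
import Mathlib

section
/- Let n ≥ 1, let k > 0 be a real constant, and let S : ℝ → (Hermitian complex n×n matrices) be differentiable with Re trace(exp(−S(λ)/k)) = 1 for all λ ∈ ℝ. Then for every λ, trace(exp(−S(λ)/k)·S'(λ)) = 0, where S'(λ) is the derivative of S at λ. -/
open Matrix

attribute [local instance] Matrix.linftyOpNormedRing Matrix.linftyOpNormedAlgebra

/-!
Since `S(λ)` is Hermitian, so is `exp(-S(λ)/k)`, whose trace is therefore real; the normalization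
thus says `tr exp(-S(λ)/k) = 1` for all `λ`, and the derivative of this constant vanishes. For a
tracial functional `τ` the derivative of `x ↦ τ(exp x)` in the direction `h` is `τ(exp x * h)`:
cyclicity turns each of the `m` terms `τ(x^i h x^(m-1-i))` of the derivative of `τ(x^m)` into
`τ(x^(m-1) h)`, and `∑ m/m! x^(m-1) = exp x`. The chain rule then gives
`-k⁻¹ tr(exp(-S/k) S') = 0`.
-/

open NormedSpace ContinuousLinearMap
open scoped Nat RightActions

section Tracial

variable {𝕂 𝔸 F : Type*} [RCLike 𝕂] [NormedRing 𝔸] [NormedAlgebra 𝕂 𝔸]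
  [NormedAddCommGroup F] [NormedSpace 𝕂 F]

theorem hasSum_natCast_div_factorial_smul_pow_sub_one [CompleteSpace 𝔸] (x : 𝔸) :
    HasSum (fun m : ℕ => ((m : 𝕂) / m !) • x ^ (m - 1)) (exp x) := by
  have hshift : (fun m : ℕ => (((m + 1 : ℕ) : 𝕂) / (m + 1) !) • x ^ (m + 1 - 1)) =
      fun m => (m ! : 𝕂)⁻¹ • x ^ m := by
    funext m
    rw [Nat.factorial_succ, Nat.add_sub_cancel]
    push_cast
    field_simp
  rw [← hasSum_nat_add_iff' 1, hshift]
  simpa using exp_series_hasSum_exp' (𝕂 := 𝕂) x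

theorem hasFDerivAt_tracial_pow (τ : 𝔸 →L[𝕂] F) (hτ : ∀ a b, τ (a * b) = τ (b * a))
    (m : ℕ) (x : 𝔸) :
    HasFDerivAt (fun y => τ (y ^ m)) ((m : 𝕂) • τ.comp (mul 𝕂 𝔸 (x ^ (m - 1)))) x := by
  refine (τ.hasFDerivAt.comp x (hasFDerivAt_pow' m)).congr_fderiv ?_
  ext H
  have hcyc : ∀ i ∈ Finset.range m,
      τ (x ^ (m - 1 - i) * H * x ^ i) = τ (x ^ (m - 1) * H) := by
    intro i hi
    rw [hτ, ← mul_assoc, ← pow_add, Nat.add_sub_cancel' (by grind)]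
  simp only [ContinuousLinearMap.comp_apply, _root_.sum_apply, _root_.smul_apply,
    ContinuousLinearMap.id_apply, smul_eq_mul, MulOpposite.smul_eq_mul_unop, MulOpposite.unop_op,
    Nat.pred_eq_sub_one, map_sum, ContinuousLinearMap.mul_apply']
  rw [Finset.sum_congr rfl hcyc, Finset.sum_const, Finset.card_range, Nat.cast_smul_eq_nsmul]

theorem hasFDerivAt_tracial_exp [CompleteSpace 𝔸] [NormOneClass 𝔸] [CompleteSpace F]
    (τ : 𝔸 →L[𝕂] F) (hτ : ∀ a b, τ (a * b) = τ (b * a)) (x : 𝔸) :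
    HasFDerivAt (fun y => τ (exp y)) (τ.comp (mul 𝕂 𝔸 (exp x))) x := by
  let L : 𝔸 →L[𝕂] 𝔸 →L[𝕂] F := (compL 𝕂 𝔸 𝔸 F τ).comp (mul 𝕂 𝔸)
  set f : ℕ → 𝔸 → F := fun m y => (m ! : 𝕂)⁻¹ • τ (y ^ m)
  set f' : ℕ → 𝔸 → 𝔸 →L[𝕂] F := fun m y => ((m : 𝕂) / m !) • L (y ^ (m - 1))
  set R := ‖x‖ + 1
  set u : ℕ → ℝ := fun m => (m / m ! : ℝ) * R ^ (m - 1) * ‖τ‖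
  have hf_sum (y : 𝔸) : HasSum (fun m => f m y) (τ (exp y)) := by
    simpa [f, map_smul] using τ.hasSum (exp_series_hasSum_exp' (𝕂 := 𝕂) y)
  have hf_deriv (m : ℕ) (y : 𝔸) : HasFDerivAt (f m) (f' m y) y :=
    ((hasFDerivAt_tracial_pow τ hτ m y).const_smul (m ! : 𝕂)⁻¹).congr_fderiv <| by
      rw [smul_smul, inv_mul_eq_div]
      rfl
  have hf'_le (m : ℕ) (y : 𝔸) (hy : y ∈ Metric.ball 0 R) : ‖f' m y‖ ≤ u m := by
    rw [mem_ball_zero_iff] at hy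
    have hLy : ‖L (y ^ (m - 1))‖ ≤ R ^ (m - 1) * ‖τ‖ :=
      calc _ ≤ ‖τ‖ * ‖mul 𝕂 𝔸 (y ^ (m - 1))‖ := opNorm_comp_le _ _
        _ ≤ ‖τ‖ * ‖y‖ ^ (m - 1) := by
          gcongr; exact (opNorm_mul_apply_le _ _ _).trans (norm_pow_le _ _)
        _ ≤ R ^ (m - 1) * ‖τ‖ := by rw [mul_comm]; gcongr
    simp only [f', u, norm_smul, norm_div, RCLike.norm_natCast, mul_assoc]
    gcongr
  have hu : Summable u := by
    simpa [u] using
      (hasSum_natCast_div_factorial_smul_pow_sub_one (𝕂 := ℝ) R).summable.mul_right ‖τ‖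
  have hf'_sum : HasSum (fun m => f' m x) (L (exp x)) := by
    simpa [f', map_smul] using
      L.hasSum (hasSum_natCast_div_factorial_smul_pow_sub_one (𝕂 := 𝕂) x)
  have hball : IsPreconnected (Metric.ball (0 : 𝔸) R) := by
    let := NormedSpace.restrictScalars ℝ 𝕂 𝔸
    exact Metric.isPreconnected_ball
  have hx : x ∈ Metric.ball 0 R := by simp [R]
  have := hasFDerivAt_tsum_of_isPreconnected hu Metric.isOpen_ball hball
    (fun m y _ => hf_deriv m y) hf'_le hx (hf_sum x).summable hx
  simp only [(hf_sum _).tsum_eq, hf'_sum.tsum_eq] at this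
  exact this

end Tracial

theorem Matrix.IsHermitian.isSelfAdjoint_trace {m R : Type*} [Fintype m] [AddCommMonoid R]
    [StarAddMonoid R] {A : Matrix m m R} (hA : A.IsHermitian) : IsSelfAdjoint A.trace := by
  rw [IsSelfAdjoint, ← trace_conjTranspose, hA.eq]

theorem Matrix.hasDerivAt_trace_exp {m 𝕂 : Type*} [Fintype m] [DecidableEq m] [Nonempty m]
    [RCLike 𝕂] {A : ℝ → Matrix m m 𝕂} {A' : Matrix m m 𝕂} {t : ℝ}
    (hA : HasDerivAt A A' t) :
    HasDerivAt (fun s => trace (exp (A s))) (trace (exp (A t) * A')) t := by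
  let τ : Matrix m m 𝕂 →L[ℝ] 𝕂 := (traceLinearMap m ℝ 𝕂).toContinuousLinearMap
  exact (hasFDerivAt_tracial_exp τ (fun a b => trace_mul_comm a b) (A t)).comp_hasDerivAt t hA

/-- `⟨dS⟩ = 0`: for a differentiable family of Hermitian entropy matrices
`S(λ)` normalized by `Re tr(exp(-S(λ)/k)) = 1`, the value of the derivative vanishes:
`tr(exp(-S(λ)/k)·S'(λ)) = 0` for every `λ`. -/
theorem value_of_entropy_differential_vanishes
    {n : ℕ} (hn : 1 ≤ n) (k : ℝ) (hk : 0 < k)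
    (S S' : ℝ → Matrix (Fin n) (Fin n) ℂ)
    (hderiv : ∀ l : ℝ, HasDerivAt S (S' l) l)
    (hherm : ∀ l : ℝ, (S l).IsHermitian)
    (hnorm : ∀ l : ℝ, (Matrix.trace (NormedSpace.exp (-(k⁻¹ • S l)))).re = 1) :
    ∀ l : ℝ, Matrix.trace (NormedSpace.exp (-(k⁻¹ • S l)) * S' l) = 0 := by
  intro l
  have : Nonempty (Fin n) := ⟨⟨0, hn⟩⟩
  have htrace (t : ℝ) : trace (exp (-(k⁻¹ • S t))) = 1 := by
    have hreal := ((hherm t).smul (IsSelfAdjoint.all k⁻¹)).neg.exp.isSelfAdjoint_trace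
    rw [← Complex.conj_eq_iff_re.mp hreal, hnorm t, Complex.ofReal_one]
  have hderiv_trace :=
    hasDerivAt_trace_exp (A := fun t => -(k⁻¹ • S t)) ((hderiv l).const_smul k⁻¹).neg
  simp only [htrace] at hderiv_trace
  have h0 := hderiv_trace.unique (hasDerivAt_const l 1)
  simpa [trace_neg, trace_smul, hk.ne'] using h0
end

section
/- Let n ≥ 1, let k > 0 and κ > 0 be real constants, and let H and X₁, …, X_m be Hermitian complex n×n matrices. Then the system function Δ defined on {(T, α) ∈ ℝ × ℝ^m : T > 0} by Δ(T, α) = κ·T·log Re trace(exp(−(H − ∑ⱼ αⱼ·Xⱼ)/(k·T))) is a convex function of (T, α) on this set. -/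
/-!
Write `F(A) = log Re tr exp A` on Hermitian matrices. `F` is convex: in the eigenbasis of
`C = a • A + b • B` one has `F(C) = log ∑ᵢ exp Cᵢᵢ`, the diagonal of `C` is the mixture of
the diagonals of `A` and `B`, log-sum-exp is convex, and by Peierls' inequality
`∑ᵢ exp Aᵢᵢ ≤ tr exp A` in every orthonormal basis. The system function is, up to the factor
`κ / k`, the perspective `(t, B) ↦ t F(B / t)` of `F` composed with the affine map
`(T, α) ↦ (k T, ∑ⱼ αⱼ Xⱼ - H)`, and perspectives of convex functions are convex.
-/

namespace Real

theorem convexOn_log_sum_exp {ι : Type*} [Fintype ι] :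
    ConvexOn ℝ Set.univ (fun x : ι → ℝ => log (∑ i, exp (x i))) := by
  rcases isEmpty_or_nonempty ι with hι | hι
  · simpa using convexOn_const (0 : ℝ) convex_univ
  have hpos (z : ι → ℝ) : 0 < ∑ i, exp (z i) :=
    Finset.sum_pos (fun i _ => exp_pos _) Finset.univ_nonempty
  have hnormalize (z : ι → ℝ) : ∑ i, exp (z i - log (∑ j, exp (z j))) = 1 := by
    simp_rw [exp_sub, exp_log (hpos z), ← Finset.sum_div, div_self (hpos z).ne']
  refine ⟨convex_univ, fun x _ y _ a b ha hb hab => ?_⟩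
  set c := a * log (∑ i, exp (x i)) + b * log (∑ i, exp (y i))
  have key : ∑ i, exp ((a • x + b • y) i - c) ≤ 1 :=
    calc ∑ i, exp ((a • x + b • y) i - c)
        = ∑ i, exp (a • (x i - log (∑ j, exp (x j))) + b • (y i - log (∑ j, exp (y j)))) := by
          simp only [c, Pi.add_apply, Pi.smul_apply, smul_eq_mul]
          congr! 2
          ring
      _ ≤ ∑ i, (a • exp (x i - log (∑ j, exp (x j))) + b • exp (y i - log (∑ j, exp (y j)))) :=
          Finset.sum_le_sum fun i _ => convexOn_exp.2 trivial trivial ha hb hab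
      _ = 1 := by
          simp only [smul_eq_mul, Finset.sum_add_distrib, ← Finset.mul_sum, hnormalize, hab,
            mul_one]
  rw [smul_eq_mul, smul_eq_mul, log_le_iff_le_exp (hpos _), ← div_le_one (exp_pos c),
    Finset.sum_div]
  simpa only [exp_sub] using key

end Real

theorem ConvexOn.perspective {𝕜 E : Type*} [Field 𝕜] [LinearOrder 𝕜] [IsStrictOrderedRing 𝕜]
    [AddCommGroup E] [Module 𝕜 E] {s : Set E} {f : E → 𝕜} (hf : ConvexOn 𝕜 s f) :
    ConvexOn 𝕜 {p : 𝕜 × E | 0 < p.1 ∧ p.1⁻¹ • p.2 ∈ s} (fun p => p.1 * f (p.1⁻¹ • p.2)) := by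
  have key : ∀ ⦃t : 𝕜⦄ ⦃x : E⦄, 0 < t → t⁻¹ • x ∈ s → ∀ ⦃u : 𝕜⦄ ⦃y : E⦄, 0 < u → u⁻¹ • y ∈ s →
      ∀ ⦃a b : 𝕜⦄, 0 ≤ a → 0 ≤ b → a + b = 1 →
      (0 < a * t + b * u ∧ (a * t + b * u)⁻¹ • (a • x + b • y) ∈ s) ∧
      (a * t + b * u) * f ((a * t + b * u)⁻¹ • (a • x + b • y))
        ≤ a * (t * f (t⁻¹ • x)) + b * (u * f (u⁻¹ • y)) := by
    intro t x ht hx u y hu hy a b ha hb hab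
    have hr : 0 < a * t + b * u := by
      rcases ha.eq_or_lt with rfl | ha'
      · simp_all
      · positivity
    have hw : a * t / (a * t + b * u) + b * u / (a * t + b * u) = 1 := by
      field_simp
    have hmix : (a * t + b * u)⁻¹ • (a • x + b • y) =
        (a * t / (a * t + b * u)) • (t⁻¹ • x) + (b * u / (a * t + b * u)) • (u⁻¹ • y) := by
      match_scalars <;> field_simp
    refine ⟨⟨hr, hmix ▸ hf.1 hx hy (by positivity) (by positivity) hw⟩, ?_⟩
    calc (a * t + b * u) * f ((a * t + b * u)⁻¹ • (a • x + b • y))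
        ≤ (a * t + b * u) * ((a * t / (a * t + b * u)) * f (t⁻¹ • x)
            + (b * u / (a * t + b * u)) * f (u⁻¹ • y)) := by
          rw [hmix]
          exact mul_le_mul_of_nonneg_left (hf.2 hx hy (by positivity) (by positivity) hw) hr.le
      _ = a * (t * f (t⁻¹ • x)) + b * (u * f (u⁻¹ • y)) := by
          field_simp
  exact ⟨fun p hp q hq a b ha hb hab => (key hp.1 hp.2 hq.1 hq.2 ha hb hab).1,
    fun p hp q hq a b ha hb hab => (key hp.1 hp.2 hq.1 hq.2 ha hb hab).2⟩

namespace Matrix.IsHermitian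

variable {𝕜 n : Type*} [RCLike 𝕜] [Fintype n] [DecidableEq n] {A : Matrix n n 𝕜}

theorem cfc_id (hA : A.IsHermitian) : hA.cfc id = A :=
  hA.spectral_theorem.symm

theorem cfc_one (hA : A.IsHermitian) : hA.cfc (fun _ => 1) = 1 := by
  simp [IsHermitian.cfc, Function.comp_def]

theorem exp_eq_cfc (hA : A.IsHermitian) : NormedSpace.exp A = hA.cfc Real.exp := by
  set U := (hA.eigenvectorUnitary : Matrix n n 𝕜)
  have hU : U⁻¹ = star U := inv_eq_left_inv (Unitary.coe_star_mul_self _)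
  have hUunit : IsUnit U := (Unitary.toUnits hA.eigenvectorUnitary).isUnit
  conv_lhs => rw [← hA.cfc_id, IsHermitian.cfc, Unitary.conjStarAlgAut_apply, ← hU,
    Matrix.exp_conj _ _ hUunit, Matrix.exp_diagonal]
  rw [IsHermitian.cfc, Unitary.conjStarAlgAut_apply, hU]
  congr 3
  funext i
  simp [Real.exp_eq_exp_ℝ, ← NormedSpace.algebraMap_exp_comm]

theorem re_diag_cfc (hA : A.IsHermitian) (f : ℝ → ℝ) (i : n) :
    RCLike.re (hA.cfc f i i)
      = ∑ j, ‖(hA.eigenvectorUnitary : Matrix n n 𝕜) i j‖ ^ 2 * f (hA.eigenvalues j) := by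
  rw [IsHermitian.cfc, Unitary.conjStarAlgAut_apply, mul_apply, map_sum]
  refine Finset.sum_congr rfl fun j _ => ?_
  rw [mul_diagonal, star_apply, mul_right_comm, RCLike.star_def, RCLike.mul_conj]
  simp [mul_comm]

theorem sum_norm_sq_eigenvectorUnitary_apply (hA : A.IsHermitian) (i : n) :
    ∑ j, ‖(hA.eigenvectorUnitary : Matrix n n 𝕜) i j‖ ^ 2 = 1 := by
  simpa [hA.cfc_one] using (hA.re_diag_cfc (fun _ => 1) i).symm

theorem trace_cfc (hA : A.IsHermitian) (f : ℝ → ℝ) :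
    (hA.cfc f).trace = ∑ i, (f (hA.eigenvalues i) : 𝕜) := by
  rw [IsHermitian.cfc, Unitary.conjStarAlgAut_apply, trace_mul_cycle, Unitary.coe_star_mul_self,
    one_mul, trace_diagonal]
  rfl

theorem re_trace_exp_eq_sum_exp_eigenvalues (hA : A.IsHermitian) :
    RCLike.re (NormedSpace.exp A).trace = ∑ i, Real.exp (hA.eigenvalues i) := by
  simp [hA.exp_eq_cfc, hA.trace_cfc]

theorem re_diag_eq_sum_eigenvalues (hA : A.IsHermitian) (i : n) :
    RCLike.re (A i i)
      = ∑ j, ‖(hA.eigenvectorUnitary : Matrix n n 𝕜) i j‖ ^ 2 * hA.eigenvalues j := by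
  simpa only [hA.cfc_id, id] using hA.re_diag_cfc id i

theorem sum_exp_re_diag_le_re_trace_exp (hA : A.IsHermitian) :
    ∑ i, Real.exp (RCLike.re (A i i)) ≤ RCLike.re (NormedSpace.exp A).trace := by
  set w : n → n → ℝ := fun i j => ‖(hA.eigenvectorUnitary : Matrix n n 𝕜) i j‖ ^ 2
  calc ∑ i, Real.exp (RCLike.re (A i i))
      = ∑ i, Real.exp (∑ j, w i j * hA.eigenvalues j) := by
        simp only [hA.re_diag_eq_sum_eigenvalues, w]
    _ ≤ ∑ i, ∑ j, w i j * Real.exp (hA.eigenvalues j) :=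
        Finset.sum_le_sum fun i _ => convexOn_exp.map_sum_le (fun j _ => sq_nonneg _)
          (hA.sum_norm_sq_eigenvectorUnitary_apply i) (fun _ _ => trivial)
    _ = RCLike.re (NormedSpace.exp A).trace := by
        simp only [hA.exp_eq_cfc, trace, diag_apply, map_sum, hA.re_diag_cfc, w]

theorem re_diag_star_eigenvectorUnitary_mul_mul (hA : A.IsHermitian) (i : n) :
    RCLike.re ((star (hA.eigenvectorUnitary : Matrix n n 𝕜) * A * hA.eigenvectorUnitary) i i)
      = hA.eigenvalues i := by
  rw [← Unitary.conjStarAlgAut_star_apply (S := 𝕜), hA.conjStarAlgAut_star_eigenvectorUnitary]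
  simp

end Matrix.IsHermitian

namespace Matrix

theorem convex_setOf_isHermitian {𝕜 n : Type*} [RCLike 𝕜] :
    Convex ℝ {A : Matrix n n 𝕜 | A.IsHermitian} :=
  (selfAdjoint.submodule ℝ (Matrix n n 𝕜)).convex

variable {𝕜 n : Type*} [RCLike 𝕜] [Fintype n] [DecidableEq n]

theorem trace_exp_unitary_conj (U : unitaryGroup n 𝕜) (A : Matrix n n 𝕜) :
    (NormedSpace.exp (star (U : Matrix n n 𝕜) * A * U)).trace = (NormedSpace.exp A).trace := by
  have hU : (U : Matrix n n 𝕜)⁻¹ = star (U : Matrix n n 𝕜) :=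
    inv_eq_left_inv (Unitary.coe_star_mul_self _)
  have hUunit : IsUnit (U : Matrix n n 𝕜) := (Unitary.toUnits U).isUnit
  rw [← hU, exp_conj' _ _ hUunit, trace_conj' hUunit]

theorem convexOn_log_re_trace_exp :
    ConvexOn ℝ {A : Matrix n n 𝕜 | A.IsHermitian}
      (fun A => Real.log (RCLike.re (NormedSpace.exp A).trace)) := by
  rcases isEmpty_or_nonempty n with hn | hn
  · simpa [trace] using convexOn_const (0 : ℝ) convex_setOf_isHermitian
  refine ⟨convex_setOf_isHermitian, fun A hA B hB a b ha hb hab => ?_⟩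
  have hC : (a • A + b • B).IsHermitian := convex_setOf_isHermitian hA hB ha hb hab
  set U := (hC.eigenvectorUnitary : Matrix n n 𝕜)
  set d : Matrix n n 𝕜 → n → ℝ := fun M i => RCLike.re ((star U * M * U) i i)
  have hd : d (a • A + b • B) = a • d A + b • d B := by
    funext i
    simp [d, Matrix.mul_add, Matrix.add_mul, RCLike.smul_re]
  have h_eq : RCLike.re (NormedSpace.exp (a • A + b • B)).trace
      = ∑ i, Real.exp (d (a • A + b • B) i) := by
    simp only [d, U, hC.re_diag_star_eigenvectorUnitary_mul_mul,
      hC.re_trace_exp_eq_sum_exp_eigenvalues]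
  have h_le : ∀ M : Matrix n n 𝕜, M.IsHermitian →
      ∑ i, Real.exp (d M i) ≤ RCLike.re (NormedSpace.exp M).trace := fun M hM => by
    rw [← trace_exp_unitary_conj hC.eigenvectorUnitary]
    exact (isHermitian_conjTranspose_mul_mul U hM).sum_exp_re_diag_le_re_trace_exp
  calc Real.log (RCLike.re (NormedSpace.exp (a • A + b • B)).trace)
      = Real.log (∑ i, Real.exp (d (a • A + b • B) i)) := by rw [h_eq]
    _ ≤ a • Real.log (∑ i, Real.exp (d A i)) + b • Real.log (∑ i, Real.exp (d B i)) := by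
        rw [hd]
        exact Real.convexOn_log_sum_exp.2 trivial trivial ha hb hab
    _ ≤ a • Real.log (RCLike.re (NormedSpace.exp A).trace)
          + b • Real.log (RCLike.re (NormedSpace.exp B).trace) := by
        gcongr
        · exact h_le A hA
        · exact h_le B hB

end Matrix

theorem system_function_convex_general
    {n m : ℕ} (k κ : ℝ) (hk : 0 < k) (hκ : 0 < κ)
    (H : Matrix (Fin n) (Fin n) ℂ) (X : Fin m → Matrix (Fin n) (Fin n) ℂ)
    (hH : H.IsHermitian) (hX : ∀ j, (X j).IsHermitian) :
    ConvexOn ℝ {p : ℝ × (Fin m → ℝ) | 0 < p.1}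
      (fun p : ℝ × (Fin m → ℝ) =>
        κ * p.1 * Real.log ((Matrix.trace (NormedSpace.exp
          (-((k * p.1)⁻¹ • (H - ∑ j, p.2 j • X j))))).re)) := by
  let L : ℝ × (Fin m → ℝ) →ᵃ[ℝ] ℝ × Matrix (Fin n) (Fin n) ℂ :=
    { toFun := fun p => (k * p.1, ∑ j, p.2 j • X j - H)
      linear := (k • LinearMap.fst ℝ _ _).prod
        (Fintype.linearCombination ℝ X ∘ₗ LinearMap.snd ℝ _ _)
      map_vadd' := fun p v => by
        ext1 <;> simp [Fintype.linearCombination_apply, add_smul, Finset.sum_add_distrib, mul_add,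
          add_sub_assoc] }
  have hmaps : {p : ℝ × (Fin m → ℝ) | 0 < p.1} ⊆
      L ⁻¹' {q | 0 < q.1 ∧ q.1⁻¹ • q.2 ∈ {A : Matrix (Fin n) (Fin n) ℂ | A.IsHermitian}} := by
    intro p hp
    have hS : (∑ j, p.2 j • X j - H) ∈ selfAdjoint.submodule ℝ (Matrix (Fin n) (Fin n) ℂ) :=
      sub_mem (Submodule.sum_mem _ fun j _ => Submodule.smul_mem _ _ (hX j)) hH
    exact ⟨mul_pos hk hp, Submodule.smul_mem _ _ hS⟩
  have hconv : Convex ℝ {p : ℝ × (Fin m → ℝ) | 0 < p.1} :=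
    convex_halfSpace_gt ⟨fun _ _ => rfl, fun _ _ => rfl⟩ 0
  have hF := (Matrix.convexOn_log_re_trace_exp (𝕜 := ℂ) (n := Fin n)).perspective
  refine (((hF.comp_affineMap L).subset hmaps hconv).smul (div_nonneg hκ.le hk.le)).congr
    fun p _ => ?_
  simp only [L, Function.comp_apply, AffineMap.coe_mk, smul_eq_mul, ← smul_neg, neg_sub]
  field_simp
  -- `RCLike.re` on `ℂ` unfolds to `Complex.re`
  rfl

/-- The system function
`Δ(T, α) = κ·T·log Re tr(exp(-(H - ∑ⱼ αⱼ·Xⱼ)/(k·T)))` is a convex function of `(T, α)` on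
the region `T > 0`. -/
theorem system_function_convex
    {n m : ℕ} (hn : 1 ≤ n) (k κ : ℝ) (hk : 0 < k) (hκ : 0 < κ)
    (H : Matrix (Fin n) (Fin n) ℂ) (X : Fin m → Matrix (Fin n) (Fin n) ℂ)
    (hH : H.IsHermitian) (hX : ∀ j, (X j).IsHermitian) :
    ConvexOn ℝ {p : ℝ × (Fin m → ℝ) | 0 < p.1}
      (fun p : ℝ × (Fin m → ℝ) =>
        κ * p.1 * Real.log ((Matrix.trace (NormedSpace.exp
          (-((k * p.1)⁻¹ • (H - ∑ j, p.2 j • X j))))).re)) :=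
  system_function_convex_general k κ hk hκ H X hH hX
end
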